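/- For all s ≥ 1, c_s(x) + c_{s-1}(x) = ∏_{k=1}^{s} (x - 2·cos(2kπ/(2s+1))), as polynomials over ℝ. -/

import Mathlib

open Polynomial Real

/-- `c n` is the paper's `c_{n-1}`, so `c 0 = c_{-1} = 0`. -/
noncomputable def c : ℕ → Polynomial ℝ
  | 0 => 0
  | 1 => 1
  | (n + 2) => X * c (n + 1) - c n

/-!
With `x = 2 cos θ`, `c n` is the Vieta–Fibonacci polynomial `S_{n-1}`, so
`sin θ · (c (s+1) + c s)(2 cos θ) = sin ((s+1)θ) + sin (sθ) = 2 sin ((2s+1)θ/2) cos (θ/2)`,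
which vanishes at `θ = 2(k+1)π/(2s+1)` for `k < s`. These angles lie in `(0, π)`, so they give
`s` distinct roots `2 cos θ` of `c (s+1) + c s`, a monic polynomial of degree `s`; hence it is
the product of the corresponding linear factors.
-/

open Finset

theorem Lagrange.eq_nodal_of_monic_of_eval_eq_zero {R ι : Type*} [CommRing R] [IsDomain R]
    {s : Finset ι} {v : ι → R} {p : R[X]} (hvs : Set.InjOn v s) (hp : p.Monic)
    (hdeg : p.natDegree = #s) (hroot : ∀ i ∈ s, p.eval (v i) = 0) : p = nodal s v := by
  have hdeg' : p.degree = #s := by rw [degree_eq_natDegree hp.ne_zero, hdeg]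
  refine eq_of_degree_le_of_eval_index_eq s hvs hdeg'.le ?_ ?_ ?_
  · rw [degree_nodal, hdeg']
  · rw [hp.leadingCoeff, nodal_monic.leadingCoeff]
  · intro i hi
    rw [hroot i hi, eval_nodal_at_node hi]

theorem Polynomial.monic_and_natDegree_eq_of_eq_X_mul_sub {R : Type*} [CommRing R] [Nontrivial R]
    {p : ℕ → R[X]} {a : R} (h0 : p 0 = 1) (h1 : p 1 = X + C a)
    (hrec : ∀ n, p (n + 2) = X * p (n + 1) - p n) :
    ∀ n, (p n).Monic ∧ (p n).natDegree = n
  | 0 => by simp [h0]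
  | 1 => by simp [h1, monic_X_add_C]
  | n + 2 => by
    obtain ⟨hm₁, hd₁⟩ := monic_and_natDegree_eq_of_eq_X_mul_sub h0 h1 hrec (n + 1)
    obtain ⟨-, hd₀⟩ := monic_and_natDegree_eq_of_eq_X_mul_sub h0 h1 hrec n
    have hXd : (X * p (n + 1)).natDegree = n + 2 := by rw [natDegree_X_mul hm₁.ne_zero, hd₁]
    have hlt : (p n).natDegree < (X * p (n + 1)).natDegree := by omega
    rw [hrec]
    exact ⟨(monic_X.mul hm₁).sub_of_left (degree_lt_degree hlt),
      by rw [natDegree_sub_eq_left_of_natDegree_lt hlt, hXd]⟩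

theorem c_eq_chebyshev_S : ∀ n : ℕ, c n = Chebyshev.S ℝ ((n : ℤ) - 1)
  | 0 => by simp [c]
  | 1 => by simp [c]
  | n + 2 => by
    rw [c, c_eq_chebyshev_S (n + 1), c_eq_chebyshev_S n,
      Chebyshev.S_eq ℝ ((n + 2 : ℕ) - 1 : ℤ)]
    push_cast
    ring_nf

theorem monic_c_succ_add_c_and_natDegree_eq (n : ℕ) :
    (c (n + 1) + c n).Monic ∧ (c (n + 1) + c n).natDegree = n :=
  monic_and_natDegree_eq_of_eq_X_mul_sub (p := fun n => c (n + 1) + c n) (a := 1)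
    (by simp [c]) (by simp [c]) (fun n => by simp only [c]; ring) n

theorem sin_mul_eval_c_succ_add_c_two_mul_cos (s : ℕ) (θ : ℝ) :
    sin θ * (c (s + 1) + c s).eval (2 * cos θ) =
      2 * sin ((2 * s + 1) * θ / 2) * cos (θ / 2) := by
  rw [eval_add, mul_add, c_eq_chebyshev_S, c_eq_chebyshev_S, mul_comm (sin θ), mul_comm (sin θ),
    Chebyshev.S_two_mul_real_cos, Chebyshev.S_two_mul_real_cos, sin_add_sin]
  push_cast
  ring_nf

theorem two_mul_succ_mul_pi_div_mem_Ioo {s k : ℕ} (hk : k < s) :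
    2 * ((k : ℝ) + 1) * π / (2 * s + 1) ∈ Set.Ioo 0 π := by
  have hk' : (k : ℝ) + 1 ≤ s := by exact_mod_cast hk
  refine ⟨by positivity, (div_lt_iff₀ (by positivity)).mpr ?_⟩
  nlinarith [pi_pos]

theorem eval_c_succ_add_c_two_mul_cos_eq_zero {s k : ℕ} (hk : k < s) :
    (c (s + 1) + c s).eval (2 * cos (2 * ((k : ℝ) + 1) * π / (2 * s + 1))) = 0 := by
  obtain ⟨hθ₀, hθπ⟩ := two_mul_succ_mul_pi_div_mem_Ioo hk
  refine (mul_eq_zero_iff_left (sin_pos_of_pos_of_lt_pi hθ₀ hθπ).ne').mp ?_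
  have hangle : (2 * s + 1) * (2 * ((k : ℝ) + 1) * π / (2 * s + 1)) / 2 =
      ((k + 1 : ℕ) : ℤ) * π := by
    field_simp
    push_cast
    ring
  rw [sin_mul_eval_c_succ_add_c_two_mul_cos, hangle, sin_int_mul_pi, mul_zero, zero_mul]

theorem injOn_two_mul_cos_two_mul_succ_mul_pi_div (s : ℕ) :
    Set.InjOn (fun k : ℕ => 2 * cos (2 * ((k : ℝ) + 1) * π / (2 * s + 1))) (range s) := by
  intro a ha b hb hab
  have hmem {k} (hk : k ∈ (range s : Set ℕ)) :=
    Set.Ioo_subset_Icc_self (two_mul_succ_mul_pi_div_mem_Ioo (mem_range.mp hk))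
  have hangle := injOn_cos (hmem ha) (hmem hb) (by simpa using hab)
  field_simp at hangle
  exact_mod_cast add_right_cancel hangle

theorem stmt_8_general (s : ℕ) :
    c (s + 1) + c s =
      ∏ k ∈ Finset.range s,
        (X - Polynomial.C (2 * Real.cos ((2 * ((k : ℝ) + 1)) * π / (2 * s + 1)))) := by
  obtain ⟨hmonic, hdeg⟩ := monic_c_succ_add_c_and_natDegree_eq s
  rw [← Lagrange.nodal_eq]
  exact Lagrange.eq_nodal_of_monic_of_eval_eq_zero (injOn_two_mul_cos_two_mul_succ_mul_pi_div s)
    hmonic (by rw [hdeg, card_range])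
    fun k hk => eval_c_succ_add_c_two_mul_cos_eq_zero (mem_range.mp hk)

theorem stmt_8 (s : ℕ) (hs : 1 ≤ s) :
    c (s + 1) + c s =
      ∏ k ∈ Finset.range s,
        (X - Polynomial.C (2 * Real.cos ((2 * ((k : ℝ) + 1)) * π / (2 * s + 1)))) :=
  stmt_8_general s
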